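/- Let P be an affine plane in ℝ³ with unit normal vector n. Let A⁺, A⁻ : ℝ³ → ℝ³ be vector fields differentiable at a point x₀ ∈ P, and assume A⁺(x) = A⁻(x) for all x ∈ P. Then the normal component of the jump of the curls vanishes: ⟪curl A⁺(x₀) − curl A⁻(x₀), n⟫ = 0. -/

import Mathlib

/-!
Since `A⁺ - A⁻` vanishes on `P`, the jump `D⁺ - D⁻` of the derivatives at `x₀` kills the
direction of `P`, which is `n^⊥`; hence it has rank one, `u ↦ ⟪n, u⟫ • c` (Hadamard's jump
condition). The curl of a field is read off its derivative, and for the rank-one map it is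
`n × c`, which is orthogonal to `n`.
-/

open scoped RealInnerProductSpace

/-- The Levi-Civita symbol on three indices: the sign of the permutation `(i,j,k)`
of `(0,1,2)` when the indices are pairwise distinct, and zero otherwise. -/
noncomputable def leviCivita (i j k : Fin 3) : ℝ :=
  if i = j ∨ j = k ∨ i = k then 0
  else if (i, j, k) = (0, 1, 2) ∨ (i, j, k) = (1, 2, 0) ∨ (i, j, k) = (2, 0, 1) then 1
  else -1

/-- The `i`-th component of the curl of a vector field `A : ℝ³ → ℝ³` at `x`:
`(curl A (x))_i = Σ_{j,k} ε_{ijk} ∂_j A_k (x)`. -/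
noncomputable def curlComp (A : EuclideanSpace ℝ (Fin 3) → EuclideanSpace ℝ (Fin 3))
    (x : EuclideanSpace ℝ (Fin 3)) (i : Fin 3) : ℝ :=
  ∑ j, ∑ k, leviCivita i j k * fderiv ℝ (fun y => A y k) x (EuclideanSpace.single j 1)

open Matrix

theorem fderiv_apply_eq_of_eqOn_affineSubspace {𝕜 E F : Type*} [NontriviallyNormedField 𝕜]
    [NormedAddCommGroup E] [NormedSpace 𝕜 E] [NormedAddCommGroup F] [NormedSpace 𝕜 F]
    {f g : E → F} {s : AffineSubspace 𝕜 E} {x v : E}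
    (hf : DifferentiableAt 𝕜 f x) (hg : DifferentiableAt 𝕜 g x) (hx : x ∈ s)
    (hfg : Set.EqOn f g s) (hv : v ∈ s.direction) :
    fderiv 𝕜 f x v = fderiv 𝕜 g x v := by
  have hline : (fun t : 𝕜 => f (x + t • v)) = fun t => g (x + t • v) := by
    funext t
    refine hfg ?_
    simpa [vadd_eq_add, add_comm] using s.vadd_mem_of_mem_direction (s.direction.smul_mem t hv) hx
  have hf' : HasLineDerivAt 𝕜 f (fderiv 𝕜 f x v) x v := hf.hasFDerivAt.hasLineDerivAt v
  have hg' : HasLineDerivAt 𝕜 g (fderiv 𝕜 g x v) x v := hg.hasFDerivAt.hasLineDerivAt v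
  unfold HasLineDerivAt at hf' hg'
  rw [hline] at hf'
  exact hf'.unique hg'

theorem exists_map_eq_inner_smul_of_map_orthogonal_eq_zero {E F 𝓕 : Type*}
    [NormedAddCommGroup E] [InnerProductSpace ℝ E] [AddCommGroup F] [Module ℝ F]
    [FunLike 𝓕 E F] [LinearMapClass 𝓕 ℝ E F] (L : 𝓕) {n : E}
    (hL : ∀ v ∈ (ℝ ∙ n)ᗮ, L v = 0) : ∃ c : F, ∀ u, L u = ⟪n, u⟫ • c := by
  refine ⟨(‖n‖ ^ 2)⁻¹ • L n, fun u => ?_⟩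
  have hperp : u - (⟪n, u⟫ / ‖n‖ ^ 2) • n ∈ (ℝ ∙ n)ᗮ := by
    rw [Submodule.mem_orthogonal_singleton_iff_inner_right, inner_sub_right, inner_smul_right,
      real_inner_self_eq_norm_sq]
    rcases eq_or_ne n 0 with rfl | hn
    · simp
    · rw [div_mul_cancel₀ _ (pow_ne_zero 2 (norm_ne_zero_iff.2 hn)), sub_self]
  have hLu := hL _ hperp
  rw [map_sub, map_smul, sub_eq_zero] at hLu
  rw [hLu, smul_smul, div_eq_mul_inv]

theorem Submodule.eq_orthogonal_span_singleton_of_finrank_add_one {E : Type*}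
    [NormedAddCommGroup E] [InnerProductSpace ℝ E] [FiniteDimensional ℝ E]
    {K : Submodule ℝ E} (hK : Module.finrank ℝ K + 1 = Module.finrank ℝ E)
    {n : E} (hn : n ∈ Kᗮ) (hn0 : n ≠ 0) : K = (ℝ ∙ n)ᗮ := by
  apply Submodule.eq_of_le_of_finrank_eq
  · intro v hv
    rw [Submodule.mem_orthogonal_singleton_iff_inner_right, real_inner_comm]
    exact hn v hv
  · have : Fact (Module.finrank ℝ E = Module.finrank ℝ K + 1) := ⟨hK.symm⟩
    exact (Submodule.finrank_orthogonal_span_singleton hn0).symm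

theorem sum_leviCivita_mul_mul (a b : Fin 3 → ℝ) (i : Fin 3) :
    ∑ j, ∑ k, leviCivita i j k * (a j * b k) = (a ⨯₃ b) i := by
  fin_cases i <;> simp [Fin.sum_univ_three, leviCivita, cross_apply] <;> ring

theorem curlComp_eq_sum_fderiv_apply {A : EuclideanSpace ℝ (Fin 3) → EuclideanSpace ℝ (Fin 3)}
    {x : EuclideanSpace ℝ (Fin 3)} (hA : DifferentiableAt ℝ A x) (i : Fin 3) :
    curlComp A x i = ∑ j, ∑ k, leviCivita i j k * fderiv ℝ A x (EuclideanSpace.single j 1) k := by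
  refine Finset.sum_congr rfl fun j _ => Finset.sum_congr rfl fun k _ => ?_
  have hAk : HasFDerivAt (fun y => A y k) ((PiLp.proj 2 _ k).comp (fderiv ℝ A x)) x :=
    (PiLp.hasFDerivAt_apply (𝕜 := ℝ) 2 (A x) k).comp x hA.hasFDerivAt
  rw [hAk.fderiv]
  rfl

theorem curlComp_sub_eq_cross_of_fderiv_sub_eq_inner_smul
    {A B : EuclideanSpace ℝ (Fin 3) → EuclideanSpace ℝ (Fin 3)} {x n c : EuclideanSpace ℝ (Fin 3)}
    (hA : DifferentiableAt ℝ A x) (hB : DifferentiableAt ℝ B x)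
    (hjump : ∀ u, (fderiv ℝ A x - fderiv ℝ B x) u = ⟪n, u⟫ • c) (i : Fin 3) :
    curlComp A x i - curlComp B x i = (⇑n ⨯₃ ⇑c) i := by
  rw [curlComp_eq_sum_fderiv_apply hA, curlComp_eq_sum_fderiv_apply hB,
    ← sum_leviCivita_mul_mul, ← Finset.sum_sub_distrib]
  refine Finset.sum_congr rfl fun j _ => ?_
  rw [← Finset.sum_sub_distrib]
  refine Finset.sum_congr rfl fun k _ => ?_
  rw [← mul_sub, ← PiLp.sub_apply, ← _root_.sub_apply, hjump]
  simp [EuclideanSpace.inner_single_right]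

theorem curl_jump_normal_component_vanishes_general
    (P : AffineSubspace ℝ (EuclideanSpace ℝ (Fin 3)))
    (hP : Module.finrank ℝ P.direction = 2)
    (n : EuclideanSpace ℝ (Fin 3)) (hn : n ∈ P.directionᗮ)
    (Aplus Aminus : EuclideanSpace ℝ (Fin 3) → EuclideanSpace ℝ (Fin 3))
    (x₀ : EuclideanSpace ℝ (Fin 3)) (hx₀ : x₀ ∈ P)
    (hAp : DifferentiableAt ℝ Aplus x₀) (hAm : DifferentiableAt ℝ Aminus x₀)
    (heq : ∀ x ∈ P, Aplus x = Aminus x) :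
    ∑ i, (curlComp Aplus x₀ i - curlComp Aminus x₀ i) * n i = 0 := by
  rcases eq_or_ne n 0 with rfl | hn0
  · simp
  have hdir : P.direction = (ℝ ∙ n)ᗮ :=
    Submodule.eq_orthogonal_span_singleton_of_finrank_add_one (by simp [hP]) hn hn0
  have hjump_deriv : ∀ v ∈ (ℝ ∙ n)ᗮ, (fderiv ℝ Aplus x₀ - fderiv ℝ Aminus x₀) v = 0 := by
    intro v hv
    rw [← hdir] at hv
    exact sub_eq_zero.2 (fderiv_apply_eq_of_eqOn_affineSubspace hAp hAm hx₀ heq hv)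
  obtain ⟨c, hc⟩ := exists_map_eq_inner_smul_of_map_orthogonal_eq_zero _ hjump_deriv
  simp_rw [curlComp_sub_eq_cross_of_fderiv_sub_eq_inner_smul hAp hAm hc]
  simpa [dotProduct, mul_comm] using dot_self_cross (⇑n) (⇑c)

/-- if two vector fields differentiable at a point `x₀` of an affine plane
`P ⊂ ℝ³` with unit normal `n` coincide on `P`, the normal component of the jump of
their curls at `x₀` vanishes: `⟪curl A⁺(x₀) − curl A⁻(x₀), n⟫ = 0`. -/
theorem curl_jump_normal_component_vanishes
    (P : AffineSubspace ℝ (EuclideanSpace ℝ (Fin 3)))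
    (hP : Module.finrank ℝ P.direction = 2)
    (n : EuclideanSpace ℝ (Fin 3)) (hn : n ∈ P.directionᗮ) (hn1 : ‖n‖ = 1)
    (Aplus Aminus : EuclideanSpace ℝ (Fin 3) → EuclideanSpace ℝ (Fin 3))
    (x₀ : EuclideanSpace ℝ (Fin 3)) (hx₀ : x₀ ∈ P)
    (hAp : DifferentiableAt ℝ Aplus x₀) (hAm : DifferentiableAt ℝ Aminus x₀)
    (heq : ∀ x ∈ P, Aplus x = Aminus x) :
    ∑ i, (curlComp Aplus x₀ i - curlComp Aminus x₀ i) * n i = 0 :=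
  curl_jump_normal_component_vanishes_general P hP n hn Aplus Aminus x₀ hx₀ hAp hAm heq
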